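/- arXiv:1401.7600 — 3 statements merged into one kernel-verified Lean document; each statement's English description precedes it below -/
import Mathlib

section
/- If l is a Lie subalgebra of sp(1) ⊕ sp(1) which is the graph of an automorphism φ of sp(1) (i.e., l = {(x, φ(x)) : x ∈ sp(1)}), then l + Δ ≠ sp(1) ⊕ sp(1), where Δ is the diagonal subalgebra. In fact dim(l + Δ) ≤ 5. -/
/-
Identify `sp(1)` with `ℝ³` by the imaginary parts; the bracket becomes twice the cross
product. The matrix `M` of an automorphism then satisfies `(M u) ⨯ (M v) = M (u ⨯ v)`, while
the cofactor identity reads `(M u) ⨯ (M v) = (adj M)ᵀ (u ⨯ v)`. Hence `adj M = Mᵀ`, so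
`M Mᵀ = det M • 1`, which forces `det M = 1`: `M` is a rotation, and
`det (M - 1) = det (1 - Mᵀ) = - det (M - 1)` gives a fixed vector `x ≠ 0`. Then `(x, x)` lies
in both `l` and `Δ`, which are `3`-dimensional, so `dim (l + Δ) ≤ 5 < 6 = dim sp(1) ⊕ sp(1)`.
-/

noncomputable section

attribute [local instance 100] LieRing.ofAssociativeRing

/-- The Lie algebra `sp(1)`: purely imaginary quaternions with the commutator bracket. -/
def sp1 : LieSubalgebra ℝ (Quaternion ℝ) where
  carrier := {x | x.re = 0}
  zero_mem' := by simp [Set.mem_setOf_eq, Quaternion.re_zero]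
  add_mem' := by
    intro x y hx hy
    simp only [Set.mem_setOf_eq, Quaternion.re_add] at *
    simp [hx, hy]
  smul_mem' := by
    intro c x hx
    simp only [Set.mem_setOf_eq, Quaternion.re_smul] at *
    simp [hx]
  lie_mem' := by
    intro x y _ _
    simp only [Set.mem_setOf_eq, Ring.lie_def, Quaternion.re_sub, Quaternion.re_mul]
    ring

/-- The Lie algebra `sp(1) ⊕ sp(1)` realized inside `ℍ × ℍ` with the componentwise
commutator bracket. -/
def sp11 : LieSubalgebra ℝ (Quaternion ℝ × Quaternion ℝ) where
  carrier := {p | p.1.re = 0 ∧ p.2.re = 0}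
  zero_mem' := by simp [Set.mem_setOf_eq, Quaternion.re_zero]
  add_mem' := by
    intro x y hx hy
    simp only [Set.mem_setOf_eq, Prod.fst_add, Prod.snd_add, Quaternion.re_add] at *
    simp [hx.1, hx.2, hy.1, hy.2]
  smul_mem' := by
    intro c x hx
    simp only [Set.mem_setOf_eq, Prod.smul_fst, Prod.smul_snd, Quaternion.re_smul] at *
    simp [hx.1, hx.2]
  lie_mem' := by
    intro x y _ _
    simp only [Set.mem_setOf_eq, Ring.lie_def, Prod.fst_sub, Prod.snd_sub, Prod.fst_mul,
      Prod.snd_mul, Quaternion.re_sub, Quaternion.re_mul]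
    constructor <;> ring

/-- The diagonal subalgebra `Δ = {(x, x) : x ∈ sp(1)}` of `sp(1) ⊕ sp(1)`. -/
def diagSp : LieSubalgebra ℝ (Quaternion ℝ × Quaternion ℝ) where
  carrier := {p | p.1 = p.2 ∧ p.1.re = 0}
  zero_mem' := by simp [Set.mem_setOf_eq, Quaternion.re_zero]
  add_mem' := by
    intro x y hx hy
    exact ⟨by simp [Prod.fst_add, Prod.snd_add, hx.1, hy.1],
      by simp [Prod.fst_add, Quaternion.re_add, hx.2, hy.2]⟩
  smul_mem' := by
    intro c x hx
    exact ⟨by simp [hx.1], by simp [Quaternion.re_smul, hx.2]⟩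
  lie_mem' := by
    intro x y hx hy
    simp only [Set.mem_setOf_eq, Ring.lie_def, Prod.fst_sub, Prod.snd_sub, Prod.fst_mul,
      Prod.snd_mul] at *
    refine ⟨by rw [hx.1, hy.1], ?_⟩
    simp only [Quaternion.re_sub, Quaternion.re_mul]
    ring

open Matrix LinearMap
open scoped Quaternion

namespace Matrix

variable {R : Type*} [CommRing R]

theorem mulVec_cross_mulVec (M : Matrix (Fin 3) (Fin 3) R) (u v : Fin 3 → R) :
    (M *ᵥ u) ⨯₃ (M *ᵥ v) = M.adjugateᵀ *ᵥ (u ⨯₃ v) := by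
  ext i
  fin_cases i <;>
    simp only [Fin.reduceFinMk, Fin.isValue, cross_apply, adjugate_fin_three, mulVec, dotProduct,
      Fin.sum_univ_three, transpose_apply, of_apply, cons_val', cons_val_fin_one, cons_val_zero,
      cons_val_one, cons_val] <;> ring

theorem adjugate_eq_transpose_of_mulVec_cross {M : Matrix (Fin 3) (Fin 3) R}
    (hM : ∀ u v, M *ᵥ (u ⨯₃ v) = (M *ᵥ u) ⨯₃ (M *ᵥ v)) : M.adjugate = Mᵀ := by
  rw [← transpose_transpose M.adjugate]
  congr 1
  refine ext_of_mulVec_single fun k => ?_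
  obtain ⟨i, j, hk⟩ :
      ∃ i j : Fin 3, Pi.single k 1 = Pi.single i 1 ⨯₃ Pi.single j (1 : R) := by
    fin_cases k
    · exact ⟨1, 2, by ext l; fin_cases l <;> simp [cross_apply]⟩
    · exact ⟨2, 0, by ext l; fin_cases l <;> simp [cross_apply]⟩
    · exact ⟨0, 1, by ext l; fin_cases l <;> simp [cross_apply]⟩
  rw [hk, ← mulVec_cross_mulVec, hM]

theorem mul_transpose_eq_one_and_det_eq_one_of_mulVec_cross {M : Matrix (Fin 3) (Fin 3) R}
    (hM : ∀ u v, M *ᵥ (u ⨯₃ v) = (M *ᵥ u) ⨯₃ (M *ᵥ v)) (hdet : IsUnit M.det) :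
    M * Mᵀ = 1 ∧ M.det = 1 := by
  have horth : M * Mᵀ = M.det • 1 := adjugate_eq_transpose_of_mulVec_cross hM ▸ mul_adjugate M
  have hcube : M.det ^ 2 = M.det ^ 3 := by
    simpa [det_smul, det_transpose, sq] using congrArg det horth
  have hone : M.det = 1 :=
    (hdet.pow 2).mul_left_cancel (by rw [← pow_succ, mul_one]; exact hcube.symm)
  exact ⟨by rw [horth, hone, one_smul], hone⟩

theorem det_sub_one_eq_zero_of_mul_transpose_eq_one {n : Type*} [Fintype n] [DecidableEq n]
    [IsAddTorsionFree R] (hn : Odd (Fintype.card n)) {M : Matrix n n R} (hM : M * Mᵀ = 1)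
    (hdet : M.det = 1) : (M - 1).det = 0 := by
  rw [← self_eq_neg]
  calc (M - 1).det = (M - M * Mᵀ).det := by rw [hM]
    _ = (M * (1 - M)ᵀ).det := by rw [transpose_sub, transpose_one, mul_sub, mul_one]
    _ = (1 - M).det := by rw [det_mul, det_transpose, hdet, one_mul]
    _ = -(M - 1).det := by rw [← neg_sub, det_neg, hn.neg_one_pow, neg_one_mul]

end Matrix

theorem Submodule.finrank_eq_of_forall_mem_iff {R M N : Type*} [Semiring R] [AddCommMonoid M]
    [Module R M] [AddCommMonoid N] [Module R N] {L : Submodule R N} {f : M →ₗ[R] N}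
    (hf : Function.Injective f) (hL : ∀ p, p ∈ L ↔ ∃ x, p = f x) :
    Module.finrank R L = Module.finrank R M := by
  rw [show L = range f from Submodule.ext fun p => (hL p).trans (by simp [eq_comm]),
    finrank_range_of_inj hf]

theorem LinearMap.det_sub_one_eq_zero_of_map_cross {R : Type*} [CommRing R] [IsAddTorsionFree R]
    {f : (Fin 3 → R) →ₗ[R] (Fin 3 → R)} (hf : ∀ u v, f (u ⨯₃ v) = f u ⨯₃ f v)
    (hdet : IsUnit (LinearMap.det f)) : LinearMap.det (f - 1) = 0 := by
  have hM (u v : Fin 3 → R) :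
      toMatrix' f *ᵥ (u ⨯₃ v) = (toMatrix' f *ᵥ u) ⨯₃ (toMatrix' f *ᵥ v) := by
    simpa only [toMatrix'_mulVec] using hf u v
  obtain ⟨horth, hone⟩ :=
    mul_transpose_eq_one_and_det_eq_one_of_mulVec_cross hM (by rwa [det_toMatrix'])
  rw [← det_toMatrix', map_sub, toMatrix'_one]
  exact det_sub_one_eq_zero_of_mul_transpose_eq_one (by decide) horth hone

namespace sp1

def coordEquiv : sp1 ≃ₗ[ℝ] (Fin 3 → ℝ) where
  toFun x := ![(x : ℍ[ℝ]).imI, (x : ℍ[ℝ]).imJ, (x : ℍ[ℝ]).imK]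
  invFun v := ⟨⟨0, v 0, v 1, v 2⟩, rfl⟩
  map_add' x y := by ext i; fin_cases i <;> rfl
  map_smul' c x := by ext i; fin_cases i <;> rfl
  left_inv x := Subtype.ext (Quaternion.ext _ _ x.2.symm rfl rfl rfl)
  right_inv v := by ext i; fin_cases i <;> rfl

theorem finrank_eq_three : Module.finrank ℝ sp1 = 3 := by
  rw [coordEquiv.finrank_eq, Module.finrank_fin_fun]

theorem coordEquiv_lie (x y : sp1) :
    coordEquiv ⁅x, y⁆ = (2 : ℝ) • (coordEquiv x ⨯₃ coordEquiv y) := by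
  have hx : (x : ℍ[ℝ]).re = 0 := x.2
  have hy : (y : ℍ[ℝ]).re = 0 := y.2
  ext i
  fin_cases i <;>
    simp only [Fin.reduceFinMk, Fin.isValue, coordEquiv, LinearEquiv.coe_mk, LinearMap.coe_mk,
      AddHom.coe_mk, LieSubalgebra.coe_bracket, Ring.lie_def, Quaternion.imI_sub,
      Quaternion.imJ_sub, Quaternion.imK_sub, Quaternion.imI_mul, Quaternion.imJ_mul,
      Quaternion.imK_mul, hx, hy, cross_apply, cons_val_zero, cons_val_one, cons_val,
      Pi.smul_apply, smul_eq_mul] <;> ring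

theorem coordEquiv_symm_cross (u v : Fin 3 → ℝ) :
    coordEquiv.symm (u ⨯₃ v) =
      (2⁻¹ : ℝ) • ⁅coordEquiv.symm u, coordEquiv.symm v⁆ := by
  rw [LinearEquiv.symm_apply_eq, map_smul, coordEquiv_lie, LinearEquiv.apply_symm_apply,
    LinearEquiv.apply_symm_apply, smul_smul, inv_mul_cancel₀ two_ne_zero, one_smul]

theorem exists_ne_zero_lieEquiv_apply_eq_self (φ : sp1 ≃ₗ⁅ℝ⁆ sp1) :
    ∃ x : sp1, x ≠ 0 ∧ φ x = x := by
  set f : Module.End ℝ sp1 := φ.toLinearEquiv.toLinearMap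
  have hcross (u v : Fin 3 → ℝ) :
      coordEquiv.conj f (u ⨯₃ v) = coordEquiv.conj f u ⨯₃ coordEquiv.conj f v := by
    simp only [LinearEquiv.conj_apply, LinearMap.comp_apply, LinearEquiv.coe_coe,
      coordEquiv_symm_cross, map_smul, f, LieEquiv.coe_toLinearEquiv, LieEquiv.map_lie,
      coordEquiv_lie, smul_smul]
    norm_num
  have hconj (g : Module.End ℝ sp1) : LinearMap.det (coordEquiv.conj g) = LinearMap.det g :=
    LinearMap.det_conj g coordEquiv
  have hdet : LinearMap.det (f - 1) = 0 := by
    change LinearMap.det (f - LinearMap.id) = 0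
    rw [← hconj, map_sub, LinearEquiv.conj_id]
    refine det_sub_one_eq_zero_of_map_cross hcross ?_
    rw [hconj]
    exact φ.toLinearEquiv.isUnit_det'
  obtain ⟨x, hx, hx0⟩ :=
    Submodule.exists_mem_ne_zero_of_ne_bot (bot_lt_ker_of_det_eq_zero hdet).ne'
  exact ⟨x, hx0, sub_eq_zero.mp hx⟩

theorem finrank_graph_eq_three {L : Submodule ℝ (ℍ[ℝ] × ℍ[ℝ])} (ψ : sp1 →ₗ[ℝ] sp1)
    (hL : ∀ p, p ∈ L ↔ ∃ x : sp1, p = ((x : ℍ[ℝ]), (ψ x : ℍ[ℝ]))) :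
    Module.finrank ℝ L = 3 := by
  rw [Submodule.finrank_eq_of_forall_mem_iff (f := sp1.incl.toLinearMap.prod
    (sp1.incl.toLinearMap ∘ₗ ψ)) (fun x y h => Subtype.ext (congrArg Prod.fst h)) hL,
    finrank_eq_three]

end sp1

theorem mem_diagSp_iff (p : ℍ[ℝ] × ℍ[ℝ]) :
    p ∈ diagSp ↔ ∃ x : sp1, p = ((x : ℍ[ℝ]), (x : ℍ[ℝ])) := by
  constructor
  · rintro ⟨h, hre⟩
    exact ⟨⟨p.1, hre⟩, Prod.ext rfl h.symm⟩
  · rintro ⟨x, rfl⟩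
    exact ⟨rfl, x.2⟩

theorem mem_sp11_iff (p : ℍ[ℝ] × ℍ[ℝ]) :
    p ∈ sp11 ↔ ∃ x : sp1 × sp1, p = ((x.1 : ℍ[ℝ]), (x.2 : ℍ[ℝ])) := by
  constructor
  · rintro ⟨h₁, h₂⟩
    exact ⟨(⟨p.1, h₁⟩, ⟨p.2, h₂⟩), rfl⟩
  · rintro ⟨x, rfl⟩
    exact ⟨x.1.2, x.2.2⟩

theorem finrank_sp11 : Module.finrank ℝ sp11.toSubmodule = 6 := by
  rw [Submodule.finrank_eq_of_forall_mem_iff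
    (f := sp1.incl.toLinearMap.prodMap sp1.incl.toLinearMap)
    (Subtype.val_injective.prodMap Subtype.val_injective) mem_sp11_iff,
    Module.finrank_prod, sp1.finrank_eq_three]

/-- If `l` is the graph of an automorphism `φ` of `sp(1)` inside
`sp(1) ⊕ sp(1)`, then `l + Δ ≠ sp(1) ⊕ sp(1)`; in fact `dim (l + Δ) ≤ 5`. -/
theorem graph_plus_diagonal_ne_top
    (φ : sp1 ≃ₗ⁅ℝ⁆ sp1)
    (l : LieSubalgebra ℝ (Quaternion ℝ × Quaternion ℝ))
    (hgraph : ∀ p : Quaternion ℝ × Quaternion ℝ,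
      p ∈ l ↔ ∃ x : sp1, p = ((x : Quaternion ℝ), (φ x : Quaternion ℝ))) :
    l.toSubmodule ⊔ diagSp.toSubmodule ≠ sp11.toSubmodule ∧
    Module.finrank ℝ ↥(l.toSubmodule ⊔ diagSp.toSubmodule) ≤ 5 := by
  obtain ⟨x, hx0, hφx⟩ := sp1.exists_ne_zero_lieEquiv_apply_eq_self φ
  have hl : Module.finrank ℝ l.toSubmodule = 3 :=
    sp1.finrank_graph_eq_three φ.toLinearEquiv.toLinearMap hgraph
  have hΔ : Module.finrank ℝ diagSp.toSubmodule = 3 :=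
    sp1.finrank_graph_eq_three LinearMap.id mem_diagSp_iff
  have hxx : ((x : ℍ[ℝ]), (x : ℍ[ℝ])) ∈ l.toSubmodule ⊓ diagSp.toSubmodule :=
    ⟨(hgraph _).mpr ⟨x, by rw [hφx]⟩, (mem_diagSp_iff _).mpr ⟨x, rfl⟩⟩
  have hmeet : 1 ≤ Module.finrank ℝ ↥(l.toSubmodule ⊓ diagSp.toSubmodule) :=
    Submodule.one_le_finrank_iff.mpr ((Submodule.ne_bot_iff _).mpr
      ⟨_, hxx, fun h => hx0 (Subtype.ext (congrArg Prod.fst h))⟩)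
  have hsum := Submodule.finrank_sup_add_finrank_inf_eq l.toSubmodule diagSp.toSubmodule
  have hle : Module.finrank ℝ ↥(l.toSubmodule ⊔ diagSp.toSubmodule) ≤ 5 := by omega
  refine ⟨fun h => ?_, hle⟩
  rw [h, finrank_sp11] at hle
  omega

end
end

section
/- If a subalgebra h = l ⊕ q of su(n,1) with q = q_{k,l'} = {[[0,z],[z̄ᵗ,0]] : z ∈ {0}^k × ℝ^{l'} × ℂ^{n−k−l'}} satisfies [q,q] ⊆ l ⊆ N_k(q) (the normalizer of q in the maximal compact subalgebra k), then l' = 0 or n − k − l' = 0. -/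
/-! Pick a real coordinate `a = k` and a complex coordinate `b = k + l'` of `q_{k,l'}`. The
bracket `[suP eₐ, suP e_b]` lies in `l`, hence normalizes `q`, but bracketing it with
`suP (i e_b)` puts the non-real entry `i` in the real coordinate `a`. -/

noncomputable section

/-- The element of `p ⊂ su(n,1)` given by the block matrix `[[0, z],[z̄ᵗ, 0]]`. -/
def suP (n : ℕ) (z : Fin n → ℂ) : Matrix (Fin n ⊕ Unit) (Fin n ⊕ Unit) ℂ :=
  Matrix.of fun i j =>
    match i, j with
    | Sum.inl _, Sum.inl _ => 0
    | Sum.inl i, Sum.inr _ => z i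
    | Sum.inr _, Sum.inl j => star (z j)
    | Sum.inr _, Sum.inr _ => 0

theorem lie_lie_suP_apply_inl_inr (n : ℕ) (z w v : Fin n → ℂ) (i : Fin n) :
    ⁅⁅suP n z, suP n w⁆, suP n v⁆ (Sum.inl i) (Sum.inr ()) =
      z i * (star w ⬝ᵥ v) - w i * (star z ⬝ᵥ v) - v i * (star z ⬝ᵥ w - star w ⬝ᵥ z) := by
  simp only [Ring.lie_def, Matrix.sub_apply, Matrix.mul_apply, Fintype.sum_sum_type,
    Finset.univ_unique, Finset.sum_singleton, suP, Matrix.of_apply, dotProduct, Pi.star_apply,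
    mul_zero, zero_mul, Finset.sum_const_zero, add_zero, zero_add, Finset.mul_sum,
    ← Finset.sum_sub_distrib]
  exact Finset.sum_congr rfl fun _ _ => by ring

theorem lie_lie_suP_single_apply_inl_inr {n : ℕ} {a b : Fin n} (hab : a ≠ b) (c : ℂ) :
    ⁅⁅suP n (Pi.single a 1), suP n (Pi.single b 1)⁆, suP n (Pi.single b c)⁆
      (Sum.inl a) (Sum.inr ()) = c := by
  simp [lie_lie_suP_apply_inl_inr, hab, hab.symm]

-- `q_{k,l'}`
def qSet (n k l' : ℕ) : Set (Matrix (Fin n ⊕ Unit) (Fin n ⊕ Unit) ℂ) :=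
  {M | ∃ z : Fin n → ℂ,
        (∀ i : Fin n, (i : ℕ) < k → z i = 0) ∧
        (∀ i : Fin n, k ≤ (i : ℕ) → (i : ℕ) < k + l' → (z i).im = 0) ∧
        M = suP n z}

theorem suP_single_mem_qSet {n k l' : ℕ} {i : Fin n} {c : ℂ} (hi : k ≤ i)
    (hc : (i : ℕ) < k + l' → c.im = 0) : suP n (Pi.single i c) ∈ qSet n k l' := by
  refine ⟨Pi.single i c, fun j hj => ?_, fun j _ hj => ?_, rfl⟩
  · have : j ≠ i := by rintro rfl; omega
    simp [this]
  · by_cases h : j = i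
    · subst h; simpa using hc hj
    · simp [h]

theorem im_apply_inl_inr_eq_zero_of_mem_qSet {n k l' : ℕ}
    {M : Matrix (Fin n ⊕ Unit) (Fin n ⊕ Unit) ℂ} (hM : M ∈ qSet n k l') {i : Fin n} (hki : k ≤ i)
    (hi : (i : ℕ) < k + l') :
    (M (Sum.inl i) (Sum.inr ())).im = 0 := by
  obtain ⟨z, -, hz, rfl⟩ := hM
  exact hz i hki hi

/-- If a subalgebra `h = l ⊕ q_{k,l'}` of `su(n,1)` satisfies
`[q,q] ⊆ l ⊆ N_k(q)`, then `l' = 0` or `n − k − l' = 0`. Here `Q` is the set of elements of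
`q_{k,l'}` and `N` is the set of elements of the normalizer of `q_{k,l'}` in the maximal
compact subalgebra `k = s(u(n) ⊕ u(1))`. -/
theorem constraint_forces_degenerate_normal_form (n k l' : ℕ) (hk : k + l' ≤ n)
    (Q : Set (Matrix (Fin n ⊕ Unit) (Fin n ⊕ Unit) ℂ))
    (hQ : Q = {M | ∃ z : Fin n → ℂ,
        (∀ i : Fin n, (i : ℕ) < k → z i = 0) ∧
        (∀ i : Fin n, k ≤ (i : ℕ) → (i : ℕ) < k + l' → (z i).im = 0) ∧
        M = suP n z})
    (N : Set (Matrix (Fin n ⊕ Unit) (Fin n ⊕ Unit) ℂ))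
    (hN : N = {M | M.conjTranspose = -M ∧ Matrix.trace M = 0 ∧
        (∀ i : Fin n, M (Sum.inl i) (Sum.inr ()) = 0 ∧ M (Sum.inr ()) (Sum.inl i) = 0) ∧
        ∀ X ∈ Q, ⁅M, X⁆ ∈ Q})
    (L : Submodule ℝ (Matrix (Fin n ⊕ Unit) (Fin n ⊕ Unit) ℂ))
    (hLN : (L : Set (Matrix (Fin n ⊕ Unit) (Fin n ⊕ Unit) ℂ)) ⊆ N)
    (hQL : ∀ X ∈ Q, ∀ Y ∈ Q, ⁅X, Y⁆ ∈ L) :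
    l' = 0 ∨ k + l' = n := by
  change Q = qSet n k l' at hQ
  subst hQ hN
  by_contra! h
  obtain ⟨hl', hkl⟩ := h
  have hb : k + l' < n := lt_of_le_of_ne hk hkl
  let a : Fin n := ⟨k, by omega⟩
  let b : Fin n := ⟨k + l', hb⟩
  have hab : a ≠ b := by simp [a, b, Fin.ext_iff]; omega
  have hX : suP n (Pi.single a 1) ∈ qSet n k l' := suP_single_mem_qSet le_rfl fun _ => rfl
  have hY : suP n (Pi.single b 1) ∈ qSet n k l' :=
    suP_single_mem_qSet (Nat.le_add_right k l') fun _ => rfl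
  have hV : suP n (Pi.single b Complex.I) ∈ qSet n k l' :=
    suP_single_mem_qSet (Nat.le_add_right k l') fun h => absurd h (lt_irrefl _)
  have hXYV := (hLN (hQL _ hX _ hY)).2.2.2 _ hV
  have hIm := im_apply_inl_inr_eq_zero_of_mem_qSet hXYV (i := a) le_rfl (by simp [a]; omega)
  rw [lie_lie_suP_single_apply_inl_inr hab] at hIm
  simp at hIm

end
end

section
/- Let L be a connected closed subgroup of O(4) acting transitively on the unit sphere S³ ⊂ ℝ⁴. Then, under the identification so(4) ≅ sp(1) ⊕ sp(1) given by quaternions, the Lie algebra of L is one of: sp(1) ⊕ sp(1), sp(1) ⊕ l₂, or l₂ ⊕ sp(1), where l₂ is a (possibly trivial or one-dimensional torus) subalgebra of sp(1); in particular l contains at least one full sp(1)-factor. -/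
noncomputable section

attribute [local instance 100] LieRing.ofAssociativeRing

/-!
Transitivity says that every imaginary quaternion is `p.1 - p.2` for some `p ∈ l`. The real part
`(x * y * z).re` is (up to sign) the triple product of imaginary `x, y, z` and vanishes when two of
them commute, so the two projections of `l` cannot both be abelian. A nonabelian subalgebra of
`sp(1)` is all of `sp(1)`, and `sp(1)` is simple; hence if the first projection is `sp(1)`, the
kernel `l ∩ (sp(1) ⊕ 0)`, an ideal of it, is `0` or `sp(1)`, and likewise for the second factor.
If both kernels vanish, `l` is the graph of a Lie algebra endomorphism `ψ` of
`sp(1) ≅ (ℝ³, ×)`, i.e. of a rotation, and `x ↦ x - ψ x` is not onto because `det (1 - ψ) = 0`.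
-/

open Quaternion Matrix

theorem Matrix.det_one_sub_eq_zero {n R : Type*} [Fintype n] [DecidableEq n] [CommRing R]
    [IsAddTorsionFree R] {M : Matrix n n R} (hM : M * Mᵀ = 1) (hdet : M.det = 1)
    (hn : Odd (Fintype.card n)) : (1 - M).det = 0 := by
  refine self_eq_neg.mp ?_
  calc (1 - M).det = (M * (M - 1)ᵀ).det := by
        rw [transpose_sub, transpose_one, mul_sub, hM, mul_one]
    _ = (-(1 - M)).det := by rw [det_mul, det_transpose, hdet, one_mul, neg_sub]
    _ = -(1 - M).det := by rw [det_neg, hn.neg_one_pow, neg_one_mul]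

-- `u, v, w` is then a positively oriented orthonormal basis: the rows of a rotation matrix.
theorem det_one_sub_eq_zero_of_cross_eq {u v w : Fin 3 → ℝ} (huv : u ⨯₃ v = w) (hvw : v ⨯₃ w = u)
    (hwu : w ⨯₃ u = v) (hu : u ≠ 0) : (1 - Matrix.of ![u, v, w]).det = 0 := by
  have hu_v : u ⬝ᵥ v = 0 := by rw [← hwu, dot_cross_self]
  have hv_w : v ⬝ᵥ w = 0 := by rw [← huv, dot_cross_self]
  have hw_u : w ⬝ᵥ u = 0 := by rw [← hvw, dot_cross_self]
  have hnorm : ∀ {a b c : Fin 3 → ℝ}, a ⨯₃ b = c → a ⬝ᵥ b = 0 → c ⬝ᵥ c = (a ⬝ᵥ a) * (b ⬝ᵥ b) :=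
    fun {a b _} h hab => by rw [← h, cross_dot_cross, dotProduct_comm b a, hab]; ring
  have hw := hnorm huv hu_v
  have hu' := hnorm hvw hv_w
  have hv := hnorm hwu hw_u
  have hnonneg : ∀ a : Fin 3 → ℝ, 0 ≤ a ⬝ᵥ a :=
    fun a => Finset.sum_nonneg fun i _ => mul_self_nonneg (a i)
  have hu1 : u ⬝ᵥ u = 1 := by
    have h : u ⬝ᵥ u * (1 - (u ⬝ᵥ u) ^ 2) = 0 := by
      linear_combination (1 - (u ⬝ᵥ u) ^ 2) * hu' + (u ⬝ᵥ u * v ⬝ᵥ v) * hv + v ⬝ᵥ v * hw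
    have := (mul_eq_zero.mp h).resolve_left (dotProduct_self_eq_zero.not.mpr hu)
    nlinarith [hnonneg u]
  have hv1 : v ⬝ᵥ v = 1 := by nlinarith [hnonneg v]
  have hw1 : w ⬝ᵥ w = 1 := by rw [hw, hu1, hv1, one_mul]
  refine det_one_sub_eq_zero ?_ ?_ (by decide)
  · have hrow : ∀ i, Matrix.of ![u, v, w] i = ![u, v, w] i := fun _ => rfl
    ext i j
    fin_cases i <;> fin_cases j <;>
      simp [mul_apply', hrow, dotProduct_comm v u, dotProduct_comm w v, dotProduct_comm u w, hu1,
        hv1, hw1, hu_v, hv_w, hw_u]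
  · change Matrix.det ![u, v, w] = 1
    rw [← triple_product_eq_det, hvw, hu1]

section Sp1

variable {x y z : ℍ}

theorem mem_sp1 : x ∈ sp1 ↔ x.re = 0 := Iff.rfl

theorem lie_mem_sp1 (x y : ℍ) : ⁅x, y⁆ ∈ sp1 := by
  simp only [mem_sp1, Ring.lie_def, re_sub, re_mul]
  ring

theorem lie_lie_self (hx : x ∈ sp1) (hy : y ∈ sp1) :
    ⁅⁅x, y⁆, x⁆ = (4 : ℝ) • (normSq x • y - inner ℝ x y • x) := by
  rw [mem_sp1] at hx hy
  ext <;> simp [Ring.lie_def, normSq_def', inner_def, hx, hy] <;> ring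

-- `x, y, ⁅x, y⁆` is a basis of `sp1`; the coefficients come from its reciprocal basis.
theorem normSq_lie_smul (hx : x ∈ sp1) (hy : y ∈ sp1) (hz : z ∈ sp1) :
    normSq ⁅x, y⁆ • z = inner ℝ z ⁅y, ⁅x, y⁆⁆ • x + inner ℝ z ⁅⁅x, y⁆, x⁆ • y +
      inner ℝ z ⁅x, y⁆ • ⁅x, y⁆ := by
  rw [mem_sp1] at hx hy hz
  ext <;> simp only [Ring.lie_def, normSq_def', inner_def, re_mul, imI_mul, imJ_mul, imK_mul,
    re_sub, imI_sub, imJ_sub, imK_sub, re_add, imI_add, imJ_add, imK_add, re_smul, imI_smul,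
    imJ_smul, imK_smul, re_star, imI_star, imJ_star, imK_star, smul_eq_mul, hx, hy, hz] <;> ring

theorem two_mul_re_mul_mul (hx : x ∈ sp1) (hy : y ∈ sp1) (hz : z ∈ sp1) :
    2 * (x * y * z).re = -inner ℝ ⁅x, y⁆ z := by
  rw [mem_sp1] at hx hy hz
  simp only [Ring.lie_def, inner_def, re_mul, imI_mul, imJ_mul, imK_mul, re_sub, imI_sub, imJ_sub,
    imK_sub, re_star, imI_star, imJ_star, imK_star, hx, hy, hz]
  ring

theorem re_mul_comm (x y : ℍ) : (x * y).re = (y * x).re := by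
  simp only [re_mul]
  ring

theorem re_mul_mul_eq_zero (hx : x ∈ sp1) (hy : y ∈ sp1) (hz : z ∈ sp1)
    (h : ⁅x, y⁆ = 0 ∨ ⁅y, z⁆ = 0 ∨ ⁅z, x⁆ = 0) : (x * y * z).re = 0 := by
  have key : ∀ {a b c : ℍ}, a ∈ sp1 → b ∈ sp1 → c ∈ sp1 → ⁅a, b⁆ = 0 → (a * b * c).re = 0 :=
    fun ha hb hc hab => by
      have h2 := two_mul_re_mul_mul ha hb hc
      rw [hab, inner_zero_left, neg_zero] at h2
      linarith
  rcases h with h | h | h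
  · exact key hx hy hz h
  · rw [mul_assoc, re_mul_comm]
    exact key hy hz hx h
  · rw [re_mul_comm, ← mul_assoc]
    exact key hz hx hy h

theorem sp1_le_of_lie_ne_zero {m : LieSubalgebra ℝ ℍ} (hm : m ≤ sp1) (hx : x ∈ m) (hy : y ∈ m)
    (hxy : ⁅x, y⁆ ≠ 0) : sp1 ≤ m := by
  intro z hz
  have hc : ⁅x, y⁆ ∈ m := m.lie_mem hx hy
  rw [← LieSubalgebra.mem_toSubmodule, ← Submodule.smul_mem_iff _ (normSq_eq_zero.not.mpr hxy),
    normSq_lie_smul (hm hx) (hm hy) hz]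
  exact add_mem (add_mem (Submodule.smul_mem _ _ hx) (Submodule.smul_mem _ _ hy))
    (Submodule.smul_mem _ _ hc)

theorem sp1_le_of_lie_mem {m : Submodule ℝ ℍ} (hx : x ∈ sp1) (hx0 : x ≠ 0) (hxm : x ∈ m)
    (hm : ∀ a ∈ sp1, ⁅a, x⁆ ∈ m) : sp1 ≤ m := by
  intro y hy
  have h4 : (4 * normSq x : ℝ) ≠ 0 := mul_ne_zero four_ne_zero (normSq_eq_zero.not.mpr hx0)
  have hy' : (4 * normSq x) • y = ⁅⁅x, y⁆, x⁆ + (4 * inner ℝ x y) • x := by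
    rw [lie_lie_self hx hy]
    module
  rw [← Submodule.smul_mem_iff _ h4, hy']
  exact add_mem (hm _ (lie_mem_sp1 x y)) (m.smul_mem _ hxm)

@[simps]
def quatI : ℍ := ⟨0, 1, 0, 0⟩

@[simps]
def quatJ : ℍ := ⟨0, 0, 1, 0⟩

@[simps]
def quatK : ℍ := ⟨0, 0, 0, 1⟩

theorem eq_imI_smul_add (hx : x ∈ sp1) : x = x.imI • quatI + x.imJ • quatJ + x.imK • quatK := by
  rw [mem_sp1] at hx
  ext <;> simp [hx]

theorem lie_quatI_quatJ : ⁅quatI, quatJ⁆ = (2 : ℝ) • quatK := by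
  ext <;> norm_num [Ring.lie_def]

theorem lie_quatJ_quatK : ⁅quatJ, quatK⁆ = (2 : ℝ) • quatI := by
  ext <;> norm_num [Ring.lie_def]

theorem lie_quatK_quatI : ⁅quatK, quatI⁆ = (2 : ℝ) • quatJ := by
  ext <;> norm_num [Ring.lie_def]

end Sp1

namespace LieSubalgebra

variable {R L₁ L₂ : Type*} [CommRing R] [LieRing L₁] [LieAlgebra R L₁] [LieRing L₂]
  [LieAlgebra R L₂] {l : LieSubalgebra R (L₁ × L₂)}

@[simp]
theorem mem_comap_inl {x : L₁} : x ∈ l.comap (LieHom.inl R L₁ L₂) ↔ (x, 0) ∈ l := Iff.rfl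

@[simp]
theorem mem_comap_inr {y : L₂} : y ∈ l.comap (LieHom.inr R L₁ L₂) ↔ (0, y) ∈ l := Iff.rfl

theorem fst_mem_map_fst {p : L₁ × L₂} (hp : p ∈ l) : p.1 ∈ l.map (LieHom.fst R L₁ L₂) :=
  ⟨p, hp, rfl⟩

theorem snd_mem_map_snd {p : L₁ × L₂} (hp : p ∈ l) : p.2 ∈ l.map (LieHom.snd R L₁ L₂) :=
  ⟨p, hp, rfl⟩

theorem lie_mem_comap_inl {p : L₁ × L₂} (hp : p ∈ l) {x : L₁}
    (hx : x ∈ l.comap (LieHom.inl R L₁ L₂)) : ⁅p.1, x⁆ ∈ l.comap (LieHom.inl R L₁ L₂) := by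
  simpa using l.lie_mem hp hx

theorem lie_mem_comap_inr {p : L₁ × L₂} (hp : p ∈ l) {y : L₂}
    (hy : y ∈ l.comap (LieHom.inr R L₁ L₂)) : ⁅p.2, y⁆ ∈ l.comap (LieHom.inr R L₁ L₂) := by
  simpa using l.lie_mem hp hy

theorem lie_fst_mem_comap_inl {p q : L₁ × L₂} (hp : p ∈ l) (hq : q ∈ l) (h : ⁅p.2, q.2⁆ = 0) :
    ⁅p.1, q.1⁆ ∈ l.comap (LieHom.inl R L₁ L₂) := by
  simpa [h] using l.lie_mem hp hq

theorem lie_snd_mem_comap_inr {p q : L₁ × L₂} (hp : p ∈ l) (hq : q ∈ l) (h : ⁅p.1, q.1⁆ = 0) :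
    ⁅p.2, q.2⁆ ∈ l.comap (LieHom.inr R L₁ L₂) := by
  simpa [h] using l.lie_mem hp hq

end LieSubalgebra

def imVec : ℍ →ₗ[ℝ] Fin 3 → ℝ where
  toFun x := ![x.imI, x.imJ, x.imK]
  map_add' x y := by ext i; fin_cases i <;> simp
  map_smul' c x := by ext i; fin_cases i <;> simp

theorem imVec_lie (x y : ℍ) : imVec ⁅x, y⁆ = (2 : ℝ) • (imVec x ⨯₃ imVec y) := by
  ext i
  fin_cases i <;> simp [imVec, cross_apply, Ring.lie_def] <;> ring

theorem imVec_ne_zero {x : ℍ} (hx : x ∈ sp1) (hx0 : x ≠ 0) : imVec x ≠ 0 := by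
  contrapose! hx0
  have h := congrFun hx0
  ext
  exacts [hx, h 0, h 1, h 2]

theorem exists_imVec_eq (v : Fin 3 → ℝ) : ∃ x ∈ sp1, imVec x = v :=
  ⟨⟨0, v 0, v 1, v 2⟩, rfl, by ext i; fin_cases i <;> rfl⟩

theorem imVec_imI_smul_add (x p q r : ℍ) :
    imVec (x.imI • p + x.imJ • q + x.imK • r) =
      imVec x ᵥ* Matrix.of ![imVec p, imVec q, imVec r] := by
  ext i
  fin_cases i <;> simp [imVec, vecMul_eq_sum, Fin.sum_univ_three]

-- `x ↦ x.imI • p + x.imJ • q + x.imK • r` is a Lie algebra endomorphism of `sp1`, hence a rotation,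
-- and a rotation of `ℝ³` fixes an axis.
theorem not_forall_exists_sub_eq {p q r : ℍ} (hp : p ∈ sp1) (hp0 : p ≠ 0)
    (hpq : ⁅p, q⁆ = (2 : ℝ) • r) (hqr : ⁅q, r⁆ = (2 : ℝ) • p) (hrp : ⁅r, p⁆ = (2 : ℝ) • q) :
    ¬ ∀ e ∈ sp1, ∃ x : ℍ, x - (x.imI • p + x.imJ • q + x.imK • r) = e := by
  intro hsurj
  have hcross : ∀ {a b c : ℍ}, ⁅a, b⁆ = (2 : ℝ) • c → imVec a ⨯₃ imVec b = imVec c :=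
    fun {a b _} h => by
      have h2 := imVec_lie a b
      rw [h, map_smul] at h2
      exact smul_right_injective _ two_ne_zero h2.symm
  have hdet := det_one_sub_eq_zero_of_cross_eq (hcross hpq) (hcross hqr) (hcross hrp)
    (imVec_ne_zero hp hp0)
  have hunit : IsUnit (1 - Matrix.of ![imVec p, imVec q, imVec r]) := by
    refine vecMul_surjective_iff_isUnit.mp fun v => ?_
    obtain ⟨e, he, rfl⟩ := exists_imVec_eq v
    obtain ⟨x, hx⟩ := hsurj e he
    refine ⟨imVec x, ?_⟩
    change imVec x ᵥ* (1 - Matrix.of ![imVec p, imVec q, imVec r]) = imVec e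
    rw [← hx, map_sub, imVec_imI_smul_add, vecMul_sub, vecMul_one]
  exact ((isUnit_iff_isUnit_det _).mp hunit).ne_zero hdet

section Transitive

open LieSubalgebra

variable {l : LieSubalgebra ℝ (ℍ × ℍ)}

theorem exists_mem_fst_sub_snd_eq
    (htrans : l.toSubmodule ⊔ diagSp.toSubmodule = sp11.toSubmodule) {e : ℍ} (he : e ∈ sp1) :
    ∃ p ∈ l, p.1 - p.2 = e := by
  have he0 : (e, (0 : ℍ)) ∈ sp11.toSubmodule := ⟨he, rfl⟩
  rw [← htrans, Submodule.mem_sup] at he0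
  obtain ⟨p, hp, d, ⟨hd, -⟩, hpd⟩ := he0
  refine ⟨p, hp, ?_⟩
  simp only [Prod.ext_iff, Prod.fst_add, Prod.snd_add, hd] at hpd
  linear_combination (norm := module) hpd.1 - hpd.2

theorem map_fst_le_sp1 (hl : l ≤ sp11) : l.map (LieHom.fst ℝ ℍ ℍ) ≤ sp1 := by
  rintro _ ⟨p, hp, rfl⟩
  exact (hl hp).1

theorem map_snd_le_sp1 (hl : l ≤ sp11) : l.map (LieHom.snd ℝ ℍ ℍ) ≤ sp1 := by
  rintro _ ⟨p, hp, rfl⟩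
  exact (hl hp).2

theorem sp1_le_comap_inl (hl : l ≤ sp11) (hfst : sp1 ≤ l.map (LieHom.fst ℝ ℍ ℍ))
    (hinl : l.comap (LieHom.inl ℝ ℍ ℍ) ≠ ⊥) : sp1 ≤ l.comap (LieHom.inl ℝ ℍ ℍ) := by
  obtain ⟨x, hx, hx0⟩ : ∃ x ∈ l.comap (LieHom.inl ℝ ℍ ℍ), x ≠ 0 := by
    simpa [LieSubalgebra.eq_bot_iff] using hinl
  refine sp1_le_of_lie_mem (m := (l.comap _).toSubmodule) (hl hx).1 hx0 hx fun a ha => ?_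
  obtain ⟨p, hp, rfl⟩ := hfst ha
  exact lie_mem_comap_inl hp hx

theorem sp1_le_comap_inr (hl : l ≤ sp11) (hsnd : sp1 ≤ l.map (LieHom.snd ℝ ℍ ℍ))
    (hinr : l.comap (LieHom.inr ℝ ℍ ℍ) ≠ ⊥) : sp1 ≤ l.comap (LieHom.inr ℝ ℍ ℍ) := by
  obtain ⟨y, hy, hy0⟩ : ∃ y ∈ l.comap (LieHom.inr ℝ ℍ ℍ), y ≠ 0 := by
    simpa [LieSubalgebra.eq_bot_iff] using hinr
  refine sp1_le_of_lie_mem (m := (l.comap _).toSubmodule) (hl hy).2 hy0 hy fun a ha => ?_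
  obtain ⟨p, hp, rfl⟩ := hsnd ha
  exact lie_mem_comap_inr hp hy

-- Of any three factors in the expansion of the triple product, two lie in the same projection of
-- `l` and commute, so every term vanishes; for `i, j, k` the triple product is `-1`.
theorem not_forall_exists_fst_sub_snd_eq (hl : l ≤ sp11)
    (h₁ : ∀ p ∈ l, ∀ q ∈ l, ⁅p.1, q.1⁆ = 0) (h₂ : ∀ p ∈ l, ∀ q ∈ l, ⁅p.2, q.2⁆ = 0) :
    ¬ ∀ e ∈ sp1, ∃ p ∈ l, p.1 - p.2 = e := by
  intro htrans
  obtain ⟨p, hp, hpi⟩ := htrans quatI rfl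
  obtain ⟨q, hq, hqj⟩ := htrans quatJ rfl
  obtain ⟨r, hr, hrk⟩ := htrans quatK rfl
  obtain ⟨hp₁, hp₂⟩ := hl hp
  obtain ⟨hq₁, hq₂⟩ := hl hq
  obtain ⟨hr₁, hr₂⟩ := hl hr
  have hvanish : ((p.1 - p.2) * (q.1 - q.2) * (r.1 - r.2)).re = 0 := by
    simp only [sub_mul, mul_sub, re_sub]
    simp only [re_mul_mul_eq_zero, mem_sp1, hp₁, hp₂, hq₁, hq₂, hr₁, hr₂, h₁ p hp q hq,
      h₁ q hq r hr, h₁ r hr p hp, h₂ p hp q hq, h₂ q hq r hr, h₂ r hr p hp, true_or, or_true,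
      sub_zero]
  rw [hpi, hqj, hrk] at hvanish
  norm_num at hvanish

-- With both kernels trivial, `l` is the graph of a Lie algebra endomorphism of `sp1`.
theorem not_comap_inl_eq_bot_and_comap_inr_eq_bot (hl : l ≤ sp11)
    (htrans : ∀ e ∈ sp1, ∃ p ∈ l, p.1 - p.2 = e) (hfst : sp1 ≤ l.map (LieHom.fst ℝ ℍ ℍ)) :
    ¬ (l.comap (LieHom.inl ℝ ℍ ℍ) = ⊥ ∧ l.comap (LieHom.inr ℝ ℍ ℍ) = ⊥) := by
  rintro ⟨hinl, hinr⟩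
  rw [LieSubalgebra.eq_bot_iff] at hinl hinr
  obtain ⟨a, ha, hai⟩ := (mem_map _ _ _).mp <| hfst (show quatI ∈ sp1 from rfl)
  obtain ⟨b, hb, hbj⟩ := (mem_map _ _ _).mp <| hfst (show quatJ ∈ sp1 from rfl)
  obtain ⟨c, hc, hck⟩ := (mem_map _ _ _).mp <| hfst (show quatK ∈ sp1 from rfl)
  rw [LieHom.fst_apply] at hai hbj hck
  have hrel : ∀ {x y z : ℍ × ℍ}, x ∈ l → y ∈ l → z ∈ l → ⁅x.1, y.1⁆ = (2 : ℝ) • z.1 →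
      ⁅x.2, y.2⁆ = (2 : ℝ) • z.2 := fun {x y z} hx hy hz h =>
    sub_eq_zero.mp <| hinr _ <| by
      show ((0 : ℍ), ⁅x.2, y.2⁆ - (2 : ℝ) • z.2) ∈ l
      convert sub_mem (l.lie_mem hx hy) (l.smul_mem (2 : ℝ) hz) using 1
      ext <;> simp [h]
  have hgraph : ∀ s ∈ l, s.2 = s.1.imI • a.2 + s.1.imJ • b.2 + s.1.imK • c.2 := by
    intro s hs
    have hsum := add_mem (add_mem (l.smul_mem s.1.imI ha) (l.smul_mem s.1.imJ hb))
      (l.smul_mem s.1.imK hc)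
    have hfst : s.1.imI • a.1 + s.1.imJ • b.1 + s.1.imK • c.1 = s.1 := by
      rw [hai, hbj, hck, ← eq_imI_smul_add (hl hs).1]
    refine sub_eq_zero.mp <| hinr _ ?_
    show ((0 : ℍ), s.2 - (s.1.imI • a.2 + s.1.imJ • b.2 + s.1.imK • c.2)) ∈ l
    convert sub_mem hs hsum using 1
    refine Prod.ext ?_ ?_ <;> simp [hfst]
  refine not_forall_exists_sub_eq (hl ha).2 ?_ (hrel ha hb hc ?_) (hrel hb hc ha ?_)
    (hrel hc ha hb ?_) ?_
  · intro ha0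
    have := hinl a.1 (by rw [mem_comap_inl, ← ha0]; exact ha)
    simpa [hai] using congrArg QuaternionAlgebra.imI this
  · rw [hai, hbj, hck, lie_quatI_quatJ]
  · rw [hai, hbj, hck, lie_quatJ_quatK]
  · rw [hai, hbj, hck, lie_quatK_quatI]
  intro e he
  obtain ⟨s, hs, rfl⟩ := htrans e he
  exact ⟨s.1, by rw [← hgraph s hs]⟩

theorem sp1_le_comap_inl_or_inr_of_lie_fst_ne_zero (hl : l ≤ sp11)
    (htrans : ∀ e ∈ sp1, ∃ p ∈ l, p.1 - p.2 = e) {p q : ℍ × ℍ} (hp : p ∈ l) (hq : q ∈ l)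
    (hpq : ⁅p.1, q.1⁆ ≠ 0) :
    sp1 ≤ l.comap (LieHom.inl ℝ ℍ ℍ) ∨ sp1 ≤ l.comap (LieHom.inr ℝ ℍ ℍ) := by
  have hfst := sp1_le_of_lie_ne_zero (map_fst_le_sp1 hl) (fst_mem_map_fst hp)
    (fst_mem_map_fst hq) hpq
  by_cases hinl : l.comap (LieHom.inl ℝ ℍ ℍ) = ⊥
  · have hpq₂ : ⁅p.2, q.2⁆ ≠ 0 := fun h =>
      hpq <| (mem_bot _).mp (hinl ▸ lie_fst_mem_comap_inl hp hq h)
    have hsnd := sp1_le_of_lie_ne_zero (map_snd_le_sp1 hl) (snd_mem_map_snd hp)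
      (snd_mem_map_snd hq) hpq₂
    have hinr : l.comap (LieHom.inr ℝ ℍ ℍ) ≠ ⊥ := fun hinr =>
      not_comap_inl_eq_bot_and_comap_inr_eq_bot hl htrans hfst ⟨hinl, hinr⟩
    exact Or.inr (sp1_le_comap_inr hl hsnd hinr)
  · exact Or.inl (sp1_le_comap_inl hl hfst hinl)

theorem sp1_le_comap_inl_or_inr (hl : l ≤ sp11) (htrans : ∀ e ∈ sp1, ∃ p ∈ l, p.1 - p.2 = e) :
    sp1 ≤ l.comap (LieHom.inl ℝ ℍ ℍ) ∨ sp1 ≤ l.comap (LieHom.inr ℝ ℍ ℍ) := by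
  by_cases h₁ : ∃ p ∈ l, ∃ q ∈ l, ⁅p.1, q.1⁆ ≠ 0
  · obtain ⟨p, hp, q, hq, hpq⟩ := h₁
    exact sp1_le_comap_inl_or_inr_of_lie_fst_ne_zero hl htrans hp hq hpq
  push Not at h₁
  by_cases h₂ : ∃ p ∈ l, ∃ q ∈ l, ⁅p.2, q.2⁆ ≠ 0
  · obtain ⟨p, hp, q, hq, hpq⟩ := h₂
    have hsnd := sp1_le_of_lie_ne_zero (map_snd_le_sp1 hl) (snd_mem_map_snd hp)
      (snd_mem_map_snd hq) hpq
    have hinr : l.comap (LieHom.inr ℝ ℍ ℍ) ≠ ⊥ := fun h =>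
      hpq <| (mem_bot _).mp (h ▸ lie_snd_mem_comap_inr hp hq (h₁ p hp q hq))
    exact Or.inr (sp1_le_comap_inr hl hsnd hinr)
  push Not at h₂
  exact absurd htrans (not_forall_exists_fst_sub_snd_eq hl h₁ h₂)

theorem mem_iff_of_sp1_le_comap_inl (hl : l ≤ sp11) (h : sp1 ≤ l.comap (LieHom.inl ℝ ℍ ℍ))
    (p : ℍ × ℍ) : p ∈ l ↔ p.1.re = 0 ∧ p.2 ∈ l.comap (LieHom.inr ℝ ℍ ℍ) := by
  refine ⟨fun hp => ⟨(hl hp).1, ?_⟩, fun ⟨h₁, h₂⟩ => ?_⟩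
  · rw [mem_comap_inr]
    convert sub_mem hp (mem_comap_inl.mp (h (hl hp).1)) using 1
    ext <;> simp
  · convert add_mem (mem_comap_inl.mp (h h₁)) (mem_comap_inr.mp h₂) using 1
    ext <;> simp

theorem mem_iff_of_sp1_le_comap_inr (hl : l ≤ sp11) (h : sp1 ≤ l.comap (LieHom.inr ℝ ℍ ℍ))
    (p : ℍ × ℍ) : p ∈ l ↔ p.1 ∈ l.comap (LieHom.inl ℝ ℍ ℍ) ∧ p.2.re = 0 := by
  refine ⟨fun hp => ⟨?_, (hl hp).2⟩, fun ⟨h₁, h₂⟩ => ?_⟩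
  · rw [mem_comap_inl]
    convert sub_mem hp (mem_comap_inr.mp (h (hl hp).2)) using 1
    ext <;> simp
  · convert add_mem (mem_comap_inl.mp h₁) (mem_comap_inr.mp (h h₂)) using 1
    ext <;> simp

end Transitive

/-- Let `L ⊆ O(4)` be a connected closed subgroup acting transitively on
`S³`; at the Lie algebra level (under `so(4) ≅ sp(1) ⊕ sp(1)`) this means that the Lie algebra
`l` of `L` satisfies `l + Δ = sp(1) ⊕ sp(1)`.  Then `l` is `sp(1) ⊕ l₂` or `l₂ ⊕ sp(1)` for
some subalgebra `l₂ ⊆ sp(1)` (possibly trivial, one-dimensional, or all of `sp(1)`); in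
particular `l` contains a full `sp(1)`-factor. -/
theorem transitive_on_sphere_lie_algebra_classification
    (l : LieSubalgebra ℝ (Quaternion ℝ × Quaternion ℝ)) (hl : l ≤ sp11)
    (htrans : l.toSubmodule ⊔ diagSp.toSubmodule = sp11.toSubmodule) :
    ((∃ l₂ : LieSubalgebra ℝ (Quaternion ℝ), l₂ ≤ sp1 ∧
        ∀ p : Quaternion ℝ × Quaternion ℝ, p ∈ l ↔ (p.1.re = 0 ∧ p.2 ∈ l₂)) ∨
      (∃ l₂ : LieSubalgebra ℝ (Quaternion ℝ), l₂ ≤ sp1 ∧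
        ∀ p : Quaternion ℝ × Quaternion ℝ, p ∈ l ↔ (p.1 ∈ l₂ ∧ p.2.re = 0))) ∧
    ((∀ x : Quaternion ℝ, x.re = 0 → ((x, 0) : Quaternion ℝ × Quaternion ℝ) ∈ l) ∨
      (∀ x : Quaternion ℝ, x.re = 0 → ((0, x) : Quaternion ℝ × Quaternion ℝ) ∈ l)) := by
  have hfactor := sp1_le_comap_inl_or_inr hl fun e he => exists_mem_fst_sub_snd_eq htrans he
  refine ⟨hfactor.imp (fun h => ?_) (fun h => ?_),
    hfactor.imp (fun h x hx => h hx) (fun h x hx => h hx)⟩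
  · exact ⟨l.comap (LieHom.inr ℝ ℍ ℍ), fun y hy => (hl hy).2, mem_iff_of_sp1_le_comap_inl hl h⟩
  · exact ⟨l.comap (LieHom.inl ℝ ℍ ℍ), fun x hx => (hl hx).1, mem_iff_of_sp1_le_comap_inr hl h⟩
end
end
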